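/- If the vacuum constraint equations (K^l_l)² - K^{ij}K_{ij} + R = -ω(π² + |∇̄φ|²_{ḡ}) + V(φ) and ḡ^{uj}(∇̄_i K_{uj} - ∇̄_j K_{ui}) + (1/2)(∇̄_j φ K^j_i - ∇̄_i φ K^l_l) = -ω π ∇̄_i φ hold for initial data (ḡ, φ̄, K, π), then the transformed data ḡ' = e^{-h}ḡ, φ̄' = φ̄ - h, K' = e^{-h/2}K, π' = e^{h/2}π satisfy the transformed constraint system obtained by replacing V(φ) with e^{h}V(φ' + h) and the scalar field gradient terms with ∇̄(φ̄' + h). -/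

import Mathlib

open scoped BigOperators

/-- Partial derivative in the `a`-th coordinate direction. -/
noncomputable def pd {d : ℕ} (a : Fin d) (f : (Fin d → ℝ) → ℝ) (x : Fin d → ℝ) : ℝ :=
  fderiv ℝ f x (Pi.single a 1)


lemma pd_exp_mul {d : ℕ} (a : Fin d) (h f : (Fin d → ℝ) → ℝ) (x : Fin d → ℝ) (c : ℝ)
    (hh : Differentiable ℝ h) (hf : Differentiable ℝ f) :
    pd a (fun y => Real.exp (c * h y) * f y) x
      = Real.exp (c * h x) * (c * pd a h x * f x + pd a f x) := by
  unfold pd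
  have hexp : DifferentiableAt ℝ (fun y => Real.exp (c * h y)) x :=
    (Real.differentiable_exp.comp ((hh.const_mul c))).differentiableAt
  rw [fderiv_fun_mul hexp (hf x), fderiv_exp ((hh.const_mul c) x),
    fderiv_const_mul (hh x)]
  simp
  ring

lemma pd_sub {d : ℕ} (a : Fin d) (f g : (Fin d → ℝ) → ℝ) (x : (Fin d → ℝ))
    (hf : Differentiable ℝ f) (hg : Differentiable ℝ g) :
    pd a (fun y => f y - g y) x = pd a f x - pd a g x := by
  unfold pd; rw [fderiv_fun_sub (hf x) (hg x)]; simp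

lemma antisym_cancel {n : ℕ} (A : Fin n → Fin n → Fin n → ℝ)
    (hsym : ∀ a b c, A a b c = A b a c) (hanti : ∀ a b c, A a b c + A a c b = 0) :
    ∀ a b c, A a b c = 0 := by
  intro a b c
  linarith [hsym a b c, hanti b a c, hsym b c a, hanti c b a, hsym c a b, hanti a b c]

lemma sum2_pull {n : ℕ} (c : ℝ) (F : Fin n → Fin n → ℝ) :
    (∑ u, ∑ j, c * F u j) = c * ∑ u, ∑ j, F u j := by
  simp [Finset.mul_sum]

lemma sum2_split {n : ℕ} (F G H : Fin n → Fin n → ℝ) :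
    (∑ u, ∑ j, (F u j - G u j + H u j))
      = (∑ u, ∑ j, F u j) - (∑ u, ∑ j, G u j) + (∑ u, ∑ j, H u j) := by
  simp [Finset.sum_add_distrib, Finset.sum_sub_distrib]

lemma sum2_split2 {n : ℕ} (F G : Fin n → Fin n → ℝ) :
    (∑ u, ∑ j, (F u j - G u j)) = (∑ u, ∑ j, F u j) - (∑ u, ∑ j, G u j) := by
  simp [Finset.sum_sub_distrib]


/-- Ricci tensor of a connection given by its Christoffel symbols. -/
noncomputable def ricci {d : ℕ} (Γ : (Fin d → ℝ) → Fin d → Fin d → Fin d → ℝ)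
    (x : Fin d → ℝ) (α β : Fin d) : ℝ :=
  (∑ μ, pd μ (fun y => Γ y μ α β) x) - (∑ μ, pd α (fun y => Γ y μ μ β) x)
    + (∑ μ, ∑ ν, Γ x μ μ ν * Γ x ν α β) - (∑ μ, ∑ ν, Γ x μ α ν * Γ x ν μ β)

/-- Covariant derivative `∇̄_i K_{uj}` of a symmetric 2-tensor `K` with
respect to the connection `Γ`. -/
noncomputable def covK {d : ℕ}
    (Γ : (Fin d → ℝ) → Fin d → Fin d → Fin d → ℝ)
    (K : (Fin d → ℝ) → Fin d → Fin d → ℝ)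
    (i u j : Fin d) (x : Fin d → ℝ) : ℝ :=
  pd i (fun y => K y u j) x - (∑ l, Γ x l i u * K x l j) - (∑ l, Γ x l i j * K x u l)

/-- **Weyl transformation of the vacuum constraint equations.**
If the initial data `(ḡ, φ̄, K, π)` (with induced Weyl connection `Γ̄` of
`(ḡ, dφ̄)`) satisfies the vacuum constraints
`(K^l_l)² - K^{ij}K_{ij} + R = -ω(π² + |∇̄φ̄|²) + V(φ̄)` and
`ḡ^{uj}(∇̄_iK_{uj} - ∇̄_jK_{ui}) + ½(∇̄_jφ̄ K^j_i - ∇̄_iφ̄ K^l_l) = -ωπ∇̄_iφ̄`,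
then the transformed data `ḡ' = e^{-h}ḡ`, `φ̄' = φ̄ - h`, `K' = e^{-h/2}K`,
`π' = e^{h/2}π` (with induced Weyl connection `Γ̄'` of `(ḡ', dφ̄')`) satisfies
the transformed constraint system, in which `V(φ̄)` is replaced by
`e^{h}V(φ̄' + h)` and the scalar-field gradient terms by `∇̄(φ̄' + h)`. -/
theorem constraints_weyl_transformation (n : ℕ) (ω : ℝ) (V : ℝ → ℝ)
    (gbar ginv : (Fin n → ℝ) → Fin n → Fin n → ℝ)
    (φb h π : (Fin n → ℝ) → ℝ)
    (K : (Fin n → ℝ) → Fin n → Fin n → ℝ)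
    (Γ Γ' : (Fin n → ℝ) → Fin n → Fin n → Fin n → ℝ)
    (gbar' ginv' : (Fin n → ℝ) → Fin n → Fin n → ℝ)
    (φb' π' : (Fin n → ℝ) → ℝ)
    (K' : (Fin n → ℝ) → Fin n → Fin n → ℝ)
    -- metric data
    (hg_sym : ∀ x a b, gbar x a b = gbar x b a)
    (hginv_sym : ∀ x a b, ginv x a b = ginv x b a)
    (h_inv : ∀ x a c, (∑ b, ginv x a b * gbar x b c) = if a = c then (1:ℝ) else 0)
    (hK_sym : ∀ x a b, K x a b = K x b a)
    -- smoothness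
    (hg_smooth : ∀ a b, ContDiff ℝ (⊤ : ℕ∞) (fun x => gbar x a b))
    (hK_smooth : ∀ a b, ContDiff ℝ (⊤ : ℕ∞) (fun x => K x a b))
    (hφ_smooth : ContDiff ℝ (⊤ : ℕ∞) φb) (hh_smooth : ContDiff ℝ (⊤ : ℕ∞) h)
    -- Γ is the Weyl connection of (ḡ, dφ̄)
    (hΓ_sym : ∀ x u a c, Γ x u a c = Γ x u c a)
    (hΓ_compat : ∀ x a b c,
      pd a (fun y => gbar y b c) x - (∑ u, Γ x u a b * gbar x u c)
        - (∑ u, Γ x u a c * gbar x b u) = pd a φb x * gbar x b c)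
    -- transformed data
    (hgbar' : ∀ x a b, gbar' x a b = Real.exp (-(h x)) * gbar x a b)
    (hginv' : ∀ x a b, ginv' x a b = Real.exp (h x) * ginv x a b)
    (hφb' : ∀ x, φb' x = φb x - h x)
    (hK' : ∀ x a b, K' x a b = Real.exp (-(h x)/2) * K x a b)
    (hπ' : ∀ x, π' x = Real.exp (h x / 2) * π x)
    -- Γ' is the Weyl connection of (ḡ', dφ̄')
    (hΓ'_sym : ∀ x u a c, Γ' x u a c = Γ' x u c a)
    (hΓ'_compat : ∀ x a b c,
      pd a (fun y => gbar' y b c) x - (∑ u, Γ' x u a b * gbar' x u c)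
        - (∑ u, Γ' x u a c * gbar' x b u) = pd a φb' x * gbar' x b c)
    -- Hamiltonian constraint for (ḡ, φ̄, K, π)
    (hHam : ∀ x,
      (∑ l, ∑ m, ginv x l m * K x l m)^2
        - (∑ i, ∑ j, ∑ u, ∑ w, ginv x i u * ginv x j w * K x i j * K x u w)
        + (∑ i, ∑ j, ginv x i j * ricci Γ x i j)
      = -ω * ((π x)^2 + ∑ i, ∑ j, ginv x i j * pd i φb x * pd j φb x)
          + V (φb x))
    -- momentum constraint for (ḡ, φ̄, K, π)
    (hMom : ∀ x i,
      (∑ u, ∑ j, ginv x u j * (covK Γ K i u j x - covK Γ K j u i x))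
        + (1/2) * ((∑ j, ∑ l, pd j φb x * ginv x j l * K x l i)
            - pd i φb x * (∑ l, ∑ m, ginv x l m * K x l m))
      = -ω * π x * pd i φb x) :
    -- transformed Hamiltonian constraint
    (∀ x,
      (∑ l, ∑ m, ginv' x l m * K' x l m)^2
        - (∑ i, ∑ j, ∑ u, ∑ w, ginv' x i u * ginv' x j w * K' x i j * K' x u w)
        + (∑ i, ∑ j, ginv' x i j * ricci Γ' x i j)
      = -ω * ((π' x)^2
            + ∑ i, ∑ j, ginv' x i j * pd i (fun y => φb' y + h y) x
                * pd j (fun y => φb' y + h y) x)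
          + Real.exp (h x) * V (φb' x + h x)) ∧
    -- transformed momentum constraint
    (∀ x i,
      (∑ u, ∑ j, ginv' x u j * (covK Γ' K' i u j x - covK Γ' K' j u i x))
        + (1/2) * ((∑ j, ∑ l, pd j φb' x * ginv' x j l * K' x l i)
            - pd i φb' x * (∑ l, ∑ m, ginv' x l m * K' x l m))
      = -ω * π' x * pd i (fun y => φb' y + h y) x) := by
  
  -- differentiability facts
  have dh : Differentiable ℝ h := hh_smooth.differentiable (by simp)
  have dφ : Differentiable ℝ φb := hφ_smooth.differentiable (by simp)
  have dg : ∀ b c, Differentiable ℝ (fun y => gbar y b c) :=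
    fun b c => (hg_smooth b c).differentiable (by simp)
  have dK : ∀ u j, Differentiable ℝ (fun y => K y u j) :=
    fun u j => (hK_smooth u j).differentiable (by simp)
  -- basic function identities
  have hφfun : (fun y => φb' y + h y) = φb := funext fun y => by rw [hφb']; ring
  have hφ'fun : φb' = fun y => φb y - h y := funext fun y => hφb' y
  have hpdφ' : ∀ x a, pd a φb' x = pd a φb x - pd a h x := by
    intro x a; rw [hφ'fun, pd_sub a φb h x dφ dh]
  -- derivative of gbar'
  have hg'fun : ∀ b c, (fun y => gbar' y b c)
      = (fun y => Real.exp ((-1:ℝ) * h y) * gbar y b c) := by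
    intro b c; funext y; rw [hgbar', neg_one_mul]
  have hpdg' : ∀ x a b c, pd a (fun y => gbar' y b c) x
      = Real.exp (-(h x)) * ((-1) * pd a h x * gbar x b c
          + pd a (fun y => gbar y b c) x) := by
    intro x a b c
    rw [hg'fun, pd_exp_mul a h _ x (-1) dh (dg b c), neg_one_mul]
  -- derivative of K'
  have hK'fun : ∀ u j, (fun y => K' y u j)
      = (fun y => Real.exp ((-1/2:ℝ) * h y) * K y u j) := by
    intro u j; funext y
    rw [hK', show -(h y)/2 = (-1/2:ℝ) * h y from by ring]
  have hpdK' : ∀ x i u j, pd i (fun y => K' y u j) x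
      = Real.exp (-(h x)/2) * ((-1/2) * pd i h x * K x u j
          + pd i (fun y => K y u j) x) := by
    intro x i u j
    rw [hK'fun, pd_exp_mul i h _ x (-1/2) dh (dK u j),
      show (-1/2:ℝ) * h x = -(h x)/2 from by ring]
  -- Γ' satisfies the same compatibility equation as Γ
  have comp' : ∀ x a b c,
      pd a (fun y => gbar y b c) x - (∑ u, Γ' x u a b * gbar x u c)
        - (∑ u, Γ' x u a c * gbar x b u) = pd a φb x * gbar x b c := by
    intro x a b c
    have hc := hΓ'_compat x a b c
    have s1 : ∑ u, Γ' x u a b * gbar' x u c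
        = Real.exp (-(h x)) * ∑ u, Γ' x u a b * gbar x u c := by
      rw [Finset.mul_sum]
      exact Finset.sum_congr rfl fun u _ => by rw [hgbar']; ring
    have s2 : ∑ u, Γ' x u a c * gbar' x b u
        = Real.exp (-(h x)) * ∑ u, Γ' x u a c * gbar x b u := by
      rw [Finset.mul_sum]
      exact Finset.sum_congr rfl fun u _ => by rw [hgbar']; ring
    rw [hpdg' x a b c, hpdφ' x a, s1, s2, hgbar' x b c] at hc
    apply mul_left_cancel₀ (Real.exp_ne_zero (-(h x)))
    linear_combination hc
  -- uniqueness of the Weyl connection : Γ' = Γ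
  have hA : ∀ x a b c,
      (∑ u, (Γ x u a b - Γ' x u a b) * gbar x u c)
        + (∑ u, (Γ x u a c - Γ' x u a c) * gbar x u b) = 0 := by
    intro x a b c
    have h1 := hΓ_compat x a b c
    have h2 := comp' x a b c
    have e1 : ∑ u, (Γ x u a b - Γ' x u a b) * gbar x u c
        = (∑ u, Γ x u a b * gbar x u c) - ∑ u, Γ' x u a b * gbar x u c := by
      rw [← Finset.sum_sub_distrib]
      exact Finset.sum_congr rfl fun u _ => by ring
    have e2 : ∑ u, (Γ x u a c - Γ' x u a c) * gbar x u b
        = (∑ u, Γ x u a c * gbar x b u) - ∑ u, Γ' x u a c * gbar x b u := by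
      rw [← Finset.sum_sub_distrib]
      exact Finset.sum_congr rfl fun u _ => by rw [hg_sym x b u]; ring
    rw [e1, e2]; linear_combination h2 - h1
  have hAzero : ∀ x a b c, (∑ u, (Γ x u a b - Γ' x u a b) * gbar x u c) = 0 := by
    intro x
    exact antisym_cancel (fun a b c => ∑ u, (Γ x u a b - Γ' x u a b) * gbar x u c)
      (fun a b c => Finset.sum_congr rfl fun u _ => by
        rw [hΓ_sym x u a b, hΓ'_sym x u a b])
      (fun a b c => hA x a b c)
  have hΓfun : Γ' = Γ := by
    funext x v a b
    have key : Γ x v a b - Γ' x v a b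
        = ∑ c, ginv x v c * ∑ u, (Γ x u a b - Γ' x u a b) * gbar x u c := by
      have step1 : ∀ c : Fin n, ginv x v c * ∑ u, (Γ x u a b - Γ' x u a b) * gbar x u c
          = ∑ u, (Γ x u a b - Γ' x u a b) * (ginv x v c * gbar x c u) := by
        intro c; rw [Finset.mul_sum]
        exact Finset.sum_congr rfl fun u _ => by rw [hg_sym x u c]; ring
      calc Γ x v a b - Γ' x v a b
          = ∑ u, (Γ x u a b - Γ' x u a b) * (if v = u then (1:ℝ) else 0) := by
            simp
        _ = ∑ u, (Γ x u a b - Γ' x u a b) * ∑ c, ginv x v c * gbar x c u := by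
            exact Finset.sum_congr rfl fun u _ => by rw [h_inv x v u]
        _ = ∑ u, ∑ c, (Γ x u a b - Γ' x u a b) * (ginv x v c * gbar x c u) := by
            exact Finset.sum_congr rfl fun u _ => by rw [Finset.mul_sum]
        _ = ∑ c, ∑ u, (Γ x u a b - Γ' x u a b) * (ginv x v c * gbar x c u) :=
            Finset.sum_comm
        _ = ∑ c, ginv x v c * ∑ u, (Γ x u a b - Γ' x u a b) * gbar x u c := by
            exact Finset.sum_congr rfl fun c _ => (step1 c).symm
    have : Γ x v a b - Γ' x v a b = 0 := by
      rw [key]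
      apply Finset.sum_eq_zero
      intro c _
      rw [hAzero x a b c, mul_zero]
    linarith
  rw [hΓfun]
  -- transformed covariant derivative of K'
  have hcovK' : ∀ x i u j, covK Γ K' i u j x
      = Real.exp (-(h x)/2) * (covK Γ K i u j x - (1/2) * pd i h x * K x u j) := by
    intro x i u j
    unfold covK
    have t1 : ∑ l, Γ x l i u * K' x l j
        = Real.exp (-(h x)/2) * ∑ l, Γ x l i u * K x l j := by
      rw [Finset.mul_sum]
      exact Finset.sum_congr rfl fun l _ => by rw [hK']; ring
    have t2 : ∑ l, Γ x l i j * K' x u l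
        = Real.exp (-(h x)/2) * ∑ l, Γ x l i j * K x u l := by
      rw [Finset.mul_sum]
      exact Finset.sum_congr rfl fun l _ => by rw [hK']; ring
    rw [hpdK' x i u j, t1, t2]; ring
  constructor
  · -- Hamiltonian constraint
    intro x
    have hme : Real.exp (h x) * Real.exp (-(h x)/2) = Real.exp (h x / 2) := by
      rw [← Real.exp_add, show h x + -(h x)/2 = h x / 2 from by ring]
    have he : Real.exp (h x / 2) * Real.exp (h x / 2) = Real.exp (h x) := by
      rw [← Real.exp_add, show h x / 2 + h x / 2 = h x from by ring]
    have hq : Real.exp (h x) * Real.exp (h x) * (Real.exp (-(h x)/2) * Real.exp (-(h x)/2))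
        = Real.exp (h x) := by
      rw [← Real.exp_add, ← Real.exp_add, ← Real.exp_add,
        show h x + h x + (-(h x)/2 + -(h x)/2) = h x from by ring]
    have H1 : (∑ l, ∑ m, ginv' x l m * K' x l m)
        = Real.exp (h x / 2) * ∑ l, ∑ m, ginv x l m * K x l m := by
      rw [Finset.mul_sum]
      refine Finset.sum_congr rfl fun l _ => ?_
      rw [Finset.mul_sum]
      refine Finset.sum_congr rfl fun m _ => ?_
      rw [hginv', hK']
      linear_combination (ginv x l m * K x l m) * hme
    have H2 : (∑ i, ∑ j, ∑ u, ∑ w, ginv' x i u * ginv' x j w * K' x i j * K' x u w)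
        = Real.exp (h x) * ∑ i, ∑ j, ∑ u, ∑ w,
            ginv x i u * ginv x j w * K x i j * K x u w := by
      rw [Finset.mul_sum]
      refine Finset.sum_congr rfl fun i _ => ?_
      rw [Finset.mul_sum]
      refine Finset.sum_congr rfl fun j _ => ?_
      rw [Finset.mul_sum]
      refine Finset.sum_congr rfl fun u _ => ?_
      rw [Finset.mul_sum]
      refine Finset.sum_congr rfl fun w _ => ?_
      simp only [hginv', hK']
      linear_combination (ginv x i u * ginv x j w * K x i j * K x u w) * hq
    have H3 : (∑ i, ∑ j, ginv' x i j * ricci Γ x i j)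
        = Real.exp (h x) * ∑ i, ∑ j, ginv x i j * ricci Γ x i j := by
      rw [Finset.mul_sum]
      refine Finset.sum_congr rfl fun i _ => ?_
      rw [Finset.mul_sum]
      refine Finset.sum_congr rfl fun j _ => ?_
      rw [hginv']; ring
    have H4 : (∑ i, ∑ j, ginv' x i j * pd i φb x * pd j φb x)
        = Real.exp (h x) * ∑ i, ∑ j, ginv x i j * pd i φb x * pd j φb x := by
      rw [Finset.mul_sum]
      refine Finset.sum_congr rfl fun i _ => ?_
      rw [Finset.mul_sum]
      refine Finset.sum_congr rfl fun j _ => ?_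
      rw [hginv']; ring
    rw [hφfun, H1, H2, H3, H4, hπ', show φb' x + h x = φb x from by rw [hφb']; ring]
    linear_combination Real.exp (h x) * hHam x
      + ((∑ l, ∑ m, ginv x l m * K x l m)^2 + ω * (π x)^2) * he
  · -- momentum constraint
    intro x i
    have hme : Real.exp (h x) * Real.exp (-(h x)/2) = Real.exp (h x / 2) := by
      rw [← Real.exp_add, show h x + -(h x)/2 = h x / 2 from by ring]
    -- P1
    have step1 : (∑ u, ∑ j, ginv' x u j * (covK Γ K' i u j x - covK Γ K' j u i x))
        = ∑ u, ∑ j,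
            (Real.exp (h x / 2) * (ginv x u j * (covK Γ K i u j x - covK Γ K j u i x))
              - (Real.exp (h x / 2) * (1/2) * pd i h x) * (ginv x u j * K x u j)
              + (1/2) * (Real.exp (h x / 2) * (pd j h x * (ginv x u j * K x u i)))) := by
      refine Finset.sum_congr rfl fun u _ => ?_
      refine Finset.sum_congr rfl fun j _ => ?_
      rw [hginv', hcovK' x i u j, hcovK' x j u i]
      linear_combination (ginv x u j * (covK Γ K i u j x - 1/2 * pd i h x * K x u j
        - covK Γ K j u i x + 1/2 * pd j h x * K x u i)) * hme
    have hU : (∑ u, ∑ j, pd j h x * (ginv x u j * K x u i))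
        = ∑ j, ∑ l, pd j h x * (ginv x j l * K x l i) := by
      rw [Finset.sum_comm]
      refine Finset.sum_congr rfl fun j _ => ?_
      refine Finset.sum_congr rfl fun l _ => ?_
      rw [hginv_sym x l j]
    have P1 : (∑ u, ∑ j, ginv' x u j * (covK Γ K' i u j x - covK Γ K' j u i x))
        = Real.exp (h x / 2) * (∑ u, ∑ j, ginv x u j * (covK Γ K i u j x - covK Γ K j u i x))
          - (Real.exp (h x / 2) * (1/2) * pd i h x) * (∑ l, ∑ m, ginv x l m * K x l m)
          + (1/2) * (Real.exp (h x / 2) * ∑ j, ∑ l, pd j h x * (ginv x j l * K x l i)) := by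
      rw [step1, sum2_split, sum2_pull, sum2_pull, sum2_pull, sum2_pull, hU]
    have P2 : (∑ j, ∑ l, pd j φb' x * ginv' x j l * K' x l i)
        = Real.exp (h x / 2) * (∑ j, ∑ l, pd j φb x * ginv x j l * K x l i)
          - Real.exp (h x / 2) * (∑ j, ∑ l, pd j h x * (ginv x j l * K x l i)) := by
      have step2 : (∑ j, ∑ l, pd j φb' x * ginv' x j l * K' x l i)
          = ∑ j, ∑ l,
              (Real.exp (h x / 2) * (pd j φb x * ginv x j l * K x l i)
                - Real.exp (h x / 2) * (pd j h x * (ginv x j l * K x l i))) := by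
        refine Finset.sum_congr rfl fun j _ => ?_
        refine Finset.sum_congr rfl fun l _ => ?_
        rw [hginv', hK', hpdφ' x j]
        linear_combination ((pd j φb x - pd j h x) * (ginv x j l * K x l i)) * hme
      rw [step2, sum2_split2, sum2_pull, sum2_pull]
    have P3 : (∑ l, ∑ m, ginv' x l m * K' x l m)
        = Real.exp (h x / 2) * ∑ l, ∑ m, ginv x l m * K x l m := by
      rw [Finset.mul_sum]
      refine Finset.sum_congr rfl fun l _ => ?_
      rw [Finset.mul_sum]
      refine Finset.sum_congr rfl fun m _ => ?_
      rw [hginv', hK']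
      linear_combination (ginv x l m * K x l m) * hme
    rw [hφfun, P1, P2, P3, hπ', hpdφ' x i]
    linear_combination Real.exp (h x / 2) * hMom x i
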